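/- Let 𝓑 be a primal feasible basis (B invertible and B⁻¹b ≥ 0) and suppose there exists w in the interior of C⁺ with Z_N w ≥ 0 (componentwise). Then the vector x ∈ ℝ^n formed by the first n components of the basic solution of 𝓑 belongs to X, is an optimal solution of (P1(w)), and is a maximizer of (P). -/

import Mathlib

/-!
Relative to the basis, every solution `v` of `[A I] v = b` satisfies
`c ⬝ᵥ v = c_𝓑 ⬝ᵥ B⁻¹ b - (Z_N w) ⬝ᵥ v_𝓝` for the weighted cost `c = [P; 0] w`, so `Z_N w ≥ 0`
makes the basic solution optimal for the weighted-sum problem (P1(w)). Since `w` lies in the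
interior of `C⁺`, it is strictly positive on `C \ {0}`, and a point maximizing such a weighted
sum cannot be dominated in the order induced by `C`.
-/

open Matrix Pointwise Filter Topology

/-- `(B⁻¹ N)ᵀ c_𝓑 - c_𝓝`; for the weighted cost `c = [P; 0] w` this is `Z_N w`
(see `reducedCost_mulVec`). -/
noncomputable def reducedCost {R ι η κ : Type*} [CommRing R] [Fintype ι] [DecidableEq ι]
    (M : Matrix ι κ R) (β : ι → κ) (ν : η → κ) (c : κ → R) : η → R :=
  ((M.submatrix id β)⁻¹ * M.submatrix id ν)ᵀ *ᵥ (c ∘ β) - c ∘ ν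

theorem reducedCost_mulVec {R ι η κ ρ : Type*} [CommRing R] [Fintype ι] [DecidableEq ι]
    [Fintype ρ] {β : ι → κ} {ν : η → κ} (M : Matrix ι κ R) (S : Matrix κ ρ R)
    (w : ρ → R) :
    reducedCost M β ν (S *ᵥ w) =
      (((M.submatrix id β)⁻¹ * M.submatrix id ν)ᵀ * S.submatrix β id - S.submatrix ν id) *ᵥ w := by
  rw [sub_mulVec, ← mulVec_mulVec]
  rfl

section Partition

variable {R ι η κ : Type*} {β : ι → κ} {ν : η → κ}

theorem nonneg_of_bijective_sumElim [Zero R] [LE R] (hβν : Function.Bijective (Sum.elim β ν))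
    {v : κ → R} (hβ : 0 ≤ v ∘ β) (hν : 0 ≤ v ∘ ν) : 0 ≤ v := by
  intro j
  obtain ⟨i | k, rfl⟩ := hβν.surjective j
  exacts [hβ i, hν k]

variable [Fintype ι] [Fintype η] [Fintype κ]

theorem sum_eq_add_of_bijective_sumElim {M : Type*} [AddCommMonoid M]
    (hβν : Function.Bijective (Sum.elim β ν)) (g : κ → M) :
    ∑ j, g j = ∑ i, g (β i) + ∑ k, g (ν k) := by
  rw [← Fintype.sum_bijective _ hβν (g ∘ Sum.elim β ν) g (fun _ => rfl), Fintype.sum_sum_type]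
  rfl

variable [CommRing R]

theorem dotProduct_eq_add_of_bijective_sumElim (hβν : Function.Bijective (Sum.elim β ν))
    (u v : κ → R) : u ⬝ᵥ v = (u ∘ β) ⬝ᵥ (v ∘ β) + (u ∘ ν) ⬝ᵥ (v ∘ ν) :=
  sum_eq_add_of_bijective_sumElim hβν _

theorem mulVec_eq_add_of_bijective_sumElim {ρ : Type*} (hβν : Function.Bijective (Sum.elim β ν))
    (M : Matrix ρ κ R) (v : κ → R) :
    M *ᵥ v = M.submatrix id β *ᵥ (v ∘ β) + M.submatrix id ν *ᵥ (v ∘ ν) := by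
  ext r
  exact dotProduct_eq_add_of_bijective_sumElim hβν (M r) v

variable [DecidableEq ι]

theorem comp_basis_eq_sub_of_mulVec_eq (hβν : Function.Bijective (Sum.elim β ν)) {M : Matrix ι κ R}
    (hB : IsUnit (M.submatrix id β)) {v : κ → R} {b : ι → R} (hv : M *ᵥ v = b) :
    v ∘ β = (M.submatrix id β)⁻¹ *ᵥ b - ((M.submatrix id β)⁻¹ * M.submatrix id ν) *ᵥ (v ∘ ν) := by
  rw [← hv, mulVec_eq_add_of_bijective_sumElim hβν, mulVec_add, mulVec_mulVec, mulVec_mulVec,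
    nonsing_inv_mul _ ((isUnit_iff_isUnit_det _).mp hB), one_mulVec, add_sub_cancel_right]

theorem dotProduct_eq_sub_reducedCost (hβν : Function.Bijective (Sum.elim β ν))
    {M : Matrix ι κ R} (hB : IsUnit (M.submatrix id β)) {v : κ → R} {b : ι → R}
    (hv : M *ᵥ v = b) (c : κ → R) :
    c ⬝ᵥ v = (c ∘ β) ⬝ᵥ ((M.submatrix id β)⁻¹ *ᵥ b) - reducedCost M β ν c ⬝ᵥ (v ∘ ν) := by
  rw [dotProduct_eq_add_of_bijective_sumElim hβν, comp_basis_eq_sub_of_mulVec_eq hβν hB hv,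
    reducedCost, sub_dotProduct, mulVec_transpose, ← dotProduct_mulVec, dotProduct_sub]
  ring

theorem mulVec_eq_of_comp_basis_eq (hβν : Function.Bijective (Sum.elim β ν)) {M : Matrix ι κ R}
    (hB : IsUnit (M.submatrix id β)) {b : ι → R} {x : κ → R}
    (hxβ : x ∘ β = (M.submatrix id β)⁻¹ *ᵥ b) (hxν : x ∘ ν = 0) : M *ᵥ x = b := by
  rw [mulVec_eq_add_of_bijective_sumElim hβν, hxβ, hxν, mulVec_zero, add_zero, mulVec_mulVec,
    mul_nonsing_inv _ ((isUnit_iff_isUnit_det _).mp hB), one_mulVec]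

theorem dotProduct_le_of_reducedCost_nonneg [PartialOrder R] [IsOrderedRing R]
    (hβν : Function.Bijective (Sum.elim β ν)) {M : Matrix ι κ R} (hB : IsUnit (M.submatrix id β))
    {b : ι → R} {c : κ → R} (hc : 0 ≤ reducedCost M β ν c) {x v : κ → R}
    (hxβ : x ∘ β = (M.submatrix id β)⁻¹ *ᵥ b) (hxν : x ∘ ν = 0)
    (hv : M *ᵥ v = b) (hv0 : 0 ≤ v) : c ⬝ᵥ v ≤ c ⬝ᵥ x := by
  rw [dotProduct_eq_sub_reducedCost hβν hB hv, dotProduct_eq_add_of_bijective_sumElim hβν c x,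
    hxβ, hxν, dotProduct_zero, add_zero]
  exact sub_le_self _ (dotProduct_nonneg_of_nonneg hc fun k => hv0 (ν k))

end Partition

theorem fromRows_zero_mulVec_dotProduct {R ι η ρ : Type*} [CommRing R] [Fintype η] [Fintype ι]
    [Fintype ρ] (P : Matrix η ρ R) (w : ρ → R) (v : η ⊕ ι → R) :
    (fromRows P (0 : Matrix ι ρ R) *ᵥ w) ⬝ᵥ v = w ⬝ᵥ Pᵀ *ᵥ (v ∘ Sum.inl) := by
  rw [fromRows_mulVec, ← Sum.elim_comp_inl_inr v, sumElim_dotProduct_sumElim, zero_mulVec,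
    zero_dotProduct, add_zero, dotProduct_mulVec, vecMul_transpose]
  rfl

theorem dotProduct_pos_of_mem_interior_dual {ι : Type*} [Fintype ι] {C : Set (ι → ℝ)}
    {w : ι → ℝ} (hw : w ∈ interior {z | ∀ v ∈ C, 0 ≤ z ⬝ᵥ v}) {c : ι → ℝ} (hc : c ∈ C)
    (hc0 : c ≠ 0) : 0 < w ⬝ᵥ c := by
  -- `w - t • c` stays in `C⁺` for small `t > 0`, so `w ⬝ᵥ c ≥ t * (c ⬝ᵥ c) > 0`.
  have hnear : ∀ᶠ t in 𝓝 (0 : ℝ), ∀ v ∈ C, 0 ≤ (w - t • c) ⬝ᵥ v :=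
    ((continuous_const.sub (continuous_id.smul continuous_const)).tendsto' 0 w (by simp)).eventually
      (mem_interior_iff_mem_nhds.mp hw)
  obtain ⟨t, hwt, ht⟩ := ((hnear.filter_mono nhdsWithin_le_nhds).and
    (self_mem_nhdsWithin : Set.Ioi (0 : ℝ) ∈ 𝓝[>] 0)).exists
  have hcc : 0 < c ⬝ᵥ c :=
    (Fintype.sum_nonneg fun i => mul_self_nonneg (c i)).lt_of_ne'
      (dotProduct_self_eq_zero.not.mpr hc0)
  have := hwt c hc
  rw [sub_dotProduct, smul_dotProduct, smul_eq_mul, sub_nonneg] at this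
  exact (mul_pos ht hcc).trans_le this

theorem inter_eq_empty_of_isMaxOn_dotProduct {ι : Type*} [Fintype ι] {C Y : Set (ι → ℝ)}
    {w y : ι → ℝ} (hpos : ∀ c ∈ C, c ≠ 0 → 0 < w ⬝ᵥ c) (hmax : IsMaxOn (w ⬝ᵥ ·) Y y) :
    ({y} + (C \ {0})) ∩ Y = ∅ := by
  rw [Set.eq_empty_iff_forall_notMem]
  rintro _ ⟨⟨_, rfl, c, ⟨hc, hc0⟩, rfl⟩, hyc⟩
  have := isMaxOn_iff.mp hmax _ hyc
  rw [dotProduct_add] at this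
  linarith [hpos c hc hc0]

theorem basic_solution_of_optimal_dictionary_is_maximizer_general
    (n m q : ℕ)
    (P : Matrix (Fin n) (Fin q) ℝ) (A : Matrix (Fin m) (Fin n) ℝ) (b : Fin m → ℝ)
    (C : Set (Fin q → ℝ))
    (X : Set (Fin n → ℝ)) (hX : X = {x | A.mulVec x ≤ b ∧ 0 ≤ x})
    -- the basis 𝓑 (columns β of [A I]) and the nonbasic columns ν
    (β : Fin m → Fin n ⊕ Fin m) (ν : Fin n → Fin n ⊕ Fin m)
    (hβν : Function.Bijective (Sum.elim β ν))
    (B : Matrix (Fin m) (Fin m) ℝ)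
    (hB : B = (Matrix.fromCols A (1 : Matrix (Fin m) (Fin m) ℝ)).submatrix id β)
    (N : Matrix (Fin m) (Fin n) ℝ)
    (hN : N = (Matrix.fromCols A (1 : Matrix (Fin m) (Fin m) ℝ)).submatrix id ν)
    (PB : Matrix (Fin m) (Fin q) ℝ)
    (hPB : PB = (Matrix.fromRows P (0 : Matrix (Fin m) (Fin q) ℝ)).submatrix β id)
    (PN : Matrix (Fin n) (Fin q) ℝ)
    (hPN : PN = (Matrix.fromRows P (0 : Matrix (Fin m) (Fin q) ℝ)).submatrix ν id)
    (ZN : Matrix (Fin n) (Fin q) ℝ)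
    (hZN : ZN = (B⁻¹ * N).transpose * PB - PN)
    (hBunit : IsUnit B)
    (hfeas : 0 ≤ B⁻¹.mulVec b)
    (w : Fin q → ℝ)
    (hw : w ∈ interior {z : Fin q → ℝ | ∀ v ∈ C, 0 ≤ z ⬝ᵥ v})
    (hZw : 0 ≤ ZN.mulVec w)
    -- the basic solution x' and its first n components x
    (x' : Fin n ⊕ Fin m → ℝ)
    (hx'B : ∀ k, x' (β k) = B⁻¹.mulVec b k)
    (hx'N : ∀ j, x' (ν j) = 0)
    (x : Fin n → ℝ) (hx : x = fun i => x' (Sum.inl i)) :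
    x ∈ X ∧
    (∀ z ∈ X, w ⬝ᵥ P.transpose.mulVec z ≤ w ⬝ᵥ P.transpose.mulVec x) ∧
    ({P.transpose.mulVec x} + (C \ {0})) ∩ (P.transpose.mulVec '' X) = ∅ := by
  subst hX hx hB hN hPB hPN hZN
  have hx'β : x' ∘ β = _ := funext hx'B
  have hx'ν : x' ∘ ν = 0 := funext hx'N
  have hx'0 : 0 ≤ x' := nonneg_of_bijective_sumElim hβν (hx'β ▸ hfeas) hx'ν.ge
  have hx'b := mulVec_eq_of_comp_basis_eq hβν hBunit hx'β hx'ν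
  have hc : 0 ≤ reducedCost (fromCols A 1) β ν (fromRows P 0 *ᵥ w) := by rwa [reducedCost_mulVec]
  have hopt : ∀ z ∈ {x | A *ᵥ x ≤ b ∧ 0 ≤ x}, w ⬝ᵥ Pᵀ *ᵥ z ≤ w ⬝ᵥ Pᵀ *ᵥ (x' ∘ Sum.inl) := by
    rintro z ⟨hAz, hz0⟩
    have hslack : fromCols A 1 *ᵥ Sum.elim z (b - A *ᵥ z) = b := by
      rw [fromCols_mulVec_sumElim, one_mulVec, add_sub_cancel]
    have := dotProduct_le_of_reducedCost_nonneg hβν hBunit hc hx'β hx'ν hslack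
      (Sum.nonneg_elim_iff.mpr ⟨hz0, sub_nonneg.mpr hAz⟩)
    rwa [fromRows_zero_mulVec_dotProduct, fromRows_zero_mulVec_dotProduct] at this
  refine ⟨⟨?_, fun i => hx'0 _⟩, hopt, inter_eq_empty_of_isMaxOn_dotProduct
    (fun c => dotProduct_pos_of_mem_interior_dual hw) ?_⟩
  · rw [fromCols_mulVec, one_mulVec] at hx'b
    exact hx'b ▸ le_add_of_nonneg_right fun i => hx'0 _
  · exact isMaxOn_iff.mpr (Set.forall_mem_image.mpr fun z hz => hopt z hz)

/-- A primal feasible basis whose reduced cost matrix satisfies Z_N w ≥ 0 for some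
w in the interior of C⁺ yields a basic solution whose first n components lie in X,
solve (P1(w)) optimally, and form a maximizer of (P). -/
theorem basic_solution_of_optimal_dictionary_is_maximizer
    (n m q : ℕ) (hn : 0 < n) (hm : 0 < m) (hq : 0 < q)
    (P : Matrix (Fin n) (Fin q) ℝ) (A : Matrix (Fin m) (Fin n) ℝ) (b : Fin m → ℝ)
    (C : Set (Fin q → ℝ))
    (hC0 : {(0 : Fin q → ℝ)} ⊂ C) (hCuniv : C ≠ Set.univ)
    (hCpoly : ∃ (k : ℕ) (Y : Fin k → Fin q → ℝ),
      C = {v | ∃ μ : Fin k → ℝ, (∀ i, 0 ≤ μ i) ∧ v = ∑ i, μ i • Y i})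
    (hCpointed : ∀ v ∈ C, -v ∈ C → v = 0)
    (hCsolid : (interior C).Nonempty)
    (X : Set (Fin n → ℝ)) (hX : X = {x | A.mulVec x ≤ b ∧ 0 ≤ x})
    -- the basis 𝓑 (columns β of [A I]) and the nonbasic columns ν
    (β : Fin m → Fin n ⊕ Fin m) (ν : Fin n → Fin n ⊕ Fin m)
    (hβν : Function.Bijective (Sum.elim β ν))
    (B : Matrix (Fin m) (Fin m) ℝ)
    (hB : B = (Matrix.fromCols A (1 : Matrix (Fin m) (Fin m) ℝ)).submatrix id β)
    (N : Matrix (Fin m) (Fin n) ℝ)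
    (hN : N = (Matrix.fromCols A (1 : Matrix (Fin m) (Fin m) ℝ)).submatrix id ν)
    (PB : Matrix (Fin m) (Fin q) ℝ)
    (hPB : PB = (Matrix.fromRows P (0 : Matrix (Fin m) (Fin q) ℝ)).submatrix β id)
    (PN : Matrix (Fin n) (Fin q) ℝ)
    (hPN : PN = (Matrix.fromRows P (0 : Matrix (Fin m) (Fin q) ℝ)).submatrix ν id)
    (ZN : Matrix (Fin n) (Fin q) ℝ)
    (hZN : ZN = (B⁻¹ * N).transpose * PB - PN)
    (hBunit : IsUnit B)
    (hfeas : 0 ≤ B⁻¹.mulVec b)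
    (w : Fin q → ℝ)
    (hw : w ∈ interior {z : Fin q → ℝ | ∀ v ∈ C, 0 ≤ z ⬝ᵥ v})
    (hZw : 0 ≤ ZN.mulVec w)
    -- the basic solution x' and its first n components x
    (x' : Fin n ⊕ Fin m → ℝ)
    (hx'B : ∀ k, x' (β k) = B⁻¹.mulVec b k)
    (hx'N : ∀ j, x' (ν j) = 0)
    (x : Fin n → ℝ) (hx : x = fun i => x' (Sum.inl i)) :
    x ∈ X ∧
    (∀ z ∈ X, w ⬝ᵥ P.transpose.mulVec z ≤ w ⬝ᵥ P.transpose.mulVec x) ∧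
    ({P.transpose.mulVec x} + (C \ {0})) ∩ (P.transpose.mulVec '' X) = ∅ :=
  basic_solution_of_optimal_dictionary_is_maximizer_general n m q P A b C X hX β ν hβν B hB N hN PB
    hPB PN hPN ZN hZN hBunit hfeas w hw hZw x' hx'B hx'N x hx
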